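/- The non-Markovian amplitude damping parameter λ(t) = 1 − e^{−gt}((g/l)·sinh(lt/2) + cosh(lt/2))², with l = √(g² − 2γg) and real parameters satisfying 0 < g and 0 < γ ≤ g/2 (so l real), lies in [0,1] for all t ≥ 0. -/

import Mathlib

lemma keyAD (g l t : ℝ) (hl : 0 < l) (hlg : l ≤ g) (ht : 0 ≤ t) :
    g * Real.sinh (l * t / 2) + l * Real.cosh (l * t / 2) ≤ l * Real.exp (g * t / 2) := by
  set a := Real.exp (l * t / 2) with hadef
  have ha : 0 < a := Real.exp_pos _
  have ha1 : 1 ≤ a := Real.one_le_exp (by positivity)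
  have hB : Real.exp (g * t / 2) = a * Real.exp ((g - l) * t / 2) := by
    rw [hadef, ← Real.exp_add]; ring_nf
  set c := Real.exp ((g - l) * t / 2) with hcdef
  have hc : 0 < c := Real.exp_pos _
  have h2 : (g - l) * t / 2 + 1 ≤ c := Real.add_one_le_exp _
  have h1 : (1 - l * t) * (a * a) ≤ 1 := by
    have h := Real.add_one_le_exp (-(l * t))
    have haa : a * a = Real.exp (l * t) := by rw [hadef, ← Real.exp_add]; ring_nf
    calc (1 - l * t) * (a * a) ≤ Real.exp (-(l * t)) * (a * a) :=
          mul_le_mul_of_nonneg_right (by linarith) (by positivity)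
      _ = 1 := by rw [haa, ← Real.exp_add]; simp
  have hgl : 0 ≤ g - l := by linarith
  have key2 : g * (a * a - 1) + l * (a * a + 1) ≤ 2 * l * (a * a) * c := by
    nlinarith [mul_nonneg hgl (sub_nonneg.2 h1), mul_nonneg (mul_nonneg hl.le (mul_pos ha ha).le) (sub_nonneg.2 h2), mul_nonneg hgl ht, mul_pos ha ha]
  rw [Real.sinh_eq, Real.cosh_eq, hB, Real.exp_neg, ← hadef]
  have hinv : a * a⁻¹ = 1 := mul_inv_cancel₀ ha.ne'
  nlinarith [key2, hinv, ha, mul_pos ha hc]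

/-- The non-Markovian amplitude-damping parameter `λ(t)`; when `l = 0` the term
`(g/l)·sinh(l t/2)` is interpreted as its limit `g t / 2`. -/
noncomputable def lamAD (g γ t : ℝ) : ℝ :=
  let l := Real.sqrt (g ^ 2 - 2 * γ * g)
  1 - Real.exp (-g * t) *
    ((if l = 0 then g * t / 2 else (g / l) * Real.sinh (l * t / 2)) + Real.cosh (l * t / 2)) ^ 2

theorem lamAD_mem_Icc (g γ : ℝ) (hg : 0 < g) (hγ : 0 < γ) (hγg : γ ≤ g / 2)
    (t : ℝ) (ht : 0 ≤ t) :
    lamAD g γ t ∈ Set.Icc (0 : ℝ) 1 := by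
  have hd : 0 ≤ g ^ 2 - 2 * γ * g := by nlinarith
  rw [lamAD]
  set l := Real.sqrt (g ^ 2 - 2 * γ * g) with hldef
  have hl0 : 0 ≤ l := Real.sqrt_nonneg _
  have hlsq : l ^ 2 = g ^ 2 - 2 * γ * g := Real.sq_sqrt hd
  have hlg : l ≤ g := by nlinarith
  set S := (if l = 0 then g * t / 2 else (g / l) * Real.sinh (l * t / 2)) + Real.cosh (l * t / 2)
    with hSdef
  have hS0 : 0 ≤ S := by
    rw [hSdef]
    have hcosh : 0 ≤ Real.cosh (l * t / 2) := le_of_lt (Real.cosh_pos _)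
    split_ifs with h
    · positivity
    · have hl : 0 < l := lt_of_le_of_ne hl0 (Ne.symm h)
      have : 0 ≤ Real.sinh (l * t / 2) := Real.sinh_nonneg_iff.mpr (by positivity)
      positivity
  have hSle : S ≤ Real.exp (g * t / 2) := by
    rw [hSdef]
    split_ifs with h
    · rw [h]
      simpa using Real.add_one_le_exp (g * t / 2)
    · have hl : 0 < l := lt_of_le_of_ne hl0 (Ne.symm h)
      have hkey := keyAD g l t hl hlg ht
      have heq : g / l * Real.sinh (l * t / 2) + Real.cosh (l * t / 2)
          = (g * Real.sinh (l * t / 2) + l * Real.cosh (l * t / 2)) / l := by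
        field_simp
      rw [heq, div_le_iff₀ hl]
      nlinarith [hkey]
  have hexp : Real.exp (-g * t) * S ^ 2 ≤ 1 := by
    have h1 : S ^ 2 ≤ Real.exp (g * t / 2) ^ 2 := pow_le_pow_left₀ hS0 hSle 2
    have h2 : Real.exp (g * t / 2) ^ 2 = Real.exp (g * t) := by
      rw [← Real.exp_nat_mul]; ring_nf
    rw [h2] at h1
    calc Real.exp (-g * t) * S ^ 2 ≤ Real.exp (-g * t) * Real.exp (g * t) :=
          mul_le_mul_of_nonneg_left h1 (Real.exp_pos _).le
      _ = 1 := by rw [← Real.exp_add]; simp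
  have hpos : 0 ≤ Real.exp (-g * t) * S ^ 2 := by positivity
  exact ⟨by linarith, by linarith⟩
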